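/- arXiv:2004.06786 — 4 statements merged into one kernel-verified Lean document; each statement's English description precedes it below -/
import Mathlib

section
/- Let k > 0, θ ∈ ℝ, σ > 0, ν > 0, and define μ_p = (1/2)·√(θ² + 2σ²/ν) + θ/2 and μ_n = (1/2)·√(θ² + 2σ²/ν) − θ/2. Then for every u ∈ ℝ satisfying u·μ_p·ν < 1 and u·μ_n·ν > −1, the integral ∫₀^∞ −(1/ν)·log(1 − u·e^{-k·s}·θ·ν − u²·e^{-2k·s}·σ²·ν/2) ds converges and equals (1/(k·ν))·( dilog(u·μ_p·ν) + dilog(−u·μ_n·ν) ), where dilog(z) := −∫₀^z log(1 − y)/y dy. -/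
/-!
Since `μp - μn = θ` and `μp * μn = σ² / (2ν)`, the argument of the logarithm factors as
`(1 - a x) (1 - b x)` with `x = exp (-k s)`, `a = u μp ν` and `b = -u μn ν`, both `< 1`.
So the integral splits into two integrals `∫₀^∞ log (1 - c exp (-k s)) ds`.
The substitution `x = exp (-k s)` turns such an integral into `k⁻¹ ∫₀¹ log (1 - c x) / x dx`,
and the scaling `y = c x` into `-k⁻¹ dilog c`.
Integrability comes from `|log (1 - c x)| ≤ C x` on `[0, 1]` for `c < 1`.
-/

open Real MeasureTheory Set

/-- The real dilogarithm (Spence's function). -/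
noncomputable def dilog (z : ℝ) : ℝ := -∫ y in (0:ℝ)..z, Real.log (1 - y) / y

lemma image_exp_neg_mul_Ioi_zero {k : ℝ} (hk : 0 < k) :
    (fun s => exp (-k * s)) '' Ioi 0 = Ioo 0 1 := by
  have : (fun s : ℝ => -k * s) '' Ioi 0 = Iio 0 := by
    ext y
    refine ⟨?_, fun hy => ⟨-y / k, div_pos (neg_pos.2 hy) hk, by field_simp⟩⟩
    rintro ⟨s, hs, rfl⟩
    exact mul_neg_of_neg_of_pos (neg_neg_of_pos hk) hs
  rw [← exp_zero, ← image_exp_Iio, ← this, image_image]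

lemma exp_neg_mul_mem_Ioo {k s : ℝ} (hk : 0 < k) (hs : s ∈ Ioi 0) : exp (-k * s) ∈ Ioo 0 1 :=
  image_exp_neg_mul_Ioi_zero hk ▸ mem_image_of_mem _ hs

lemma integral_Ioi_comp_exp_neg_mul {E : Type*} [NormedAddCommGroup E] [NormedSpace ℝ E]
    {k : ℝ} (hk : 0 < k) (g : ℝ → E) :
    ∫ s in Ioi 0, g (exp (-k * s)) = k⁻¹ • ∫ x in Ioo 0 1, x⁻¹ • g x := by
  have hderiv : ∀ s ∈ Ioi (0:ℝ), HasDerivWithinAt (fun s => exp (-k * s))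
      (exp (-k * s) * -k) (Ioi 0) s := fun s _ =>
    ((hasDerivAt_id s).const_mul (-k)).exp.hasDerivWithinAt.congr_deriv (by simp)
  have hinj : InjOn (fun s => exp (-k * s)) (Ioi 0) := fun s _ t _ h =>
    mul_left_cancel₀ (neg_ne_zero.2 hk.ne') (exp_injective h)
  rw [← image_exp_neg_mul_Ioi_zero hk,
    integral_image_eq_integral_abs_deriv_smul measurableSet_Ioi hderiv hinj, ← integral_smul]
  refine setIntegral_congr_fun measurableSet_Ioi fun s _ => ?_
  rw [smul_smul, smul_smul, abs_mul, abs_of_pos (exp_pos _), abs_neg, abs_of_pos hk,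
    show k⁻¹ * (exp (-k * s) * k) * (exp (-k * s))⁻¹ = 1 by field_simp, one_smul]

lemma integral_log_one_sub_mul_div (c : ℝ) :
    ∫ x in (0:ℝ)..1, log (1 - c * x) / x = -dilog c := by
  have hscale : ∀ x : ℝ, log (1 - c * x) / x = c • (log (1 - c * x) / (c * x)) := by
    intro x
    rcases eq_or_ne c 0 with rfl | hc
    · simp
    rcases eq_or_ne x 0 with rfl | hx
    · simp
    rw [smul_eq_mul]; field_simp
  simp_rw [hscale, intervalIntegral.integral_smul, intervalIntegral.smul_integral_comp_mul_left
    (fun y => log (1 - y) / y), mul_zero, mul_one, dilog, neg_neg]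

lemma abs_log_le_abs_sub_one_div {m z : ℝ} (hm : 0 < m) (hm1 : m ≤ 1) (hz : m ≤ z) :
    |log z| ≤ |z - 1| / m := by
  have hz0 : 0 < z := hm.trans_le hz
  rcases le_total 1 z with h1 | h1
  · rw [abs_of_nonneg (log_nonneg h1), abs_of_nonneg (sub_nonneg.2 h1), le_div_iff₀ hm]
    nlinarith [log_le_sub_one_of_pos hz0, log_nonneg h1]
  · rw [abs_of_nonpos (log_nonpos hz0.le h1), abs_of_nonpos (sub_nonpos.2 h1), le_div_iff₀ hm]
    have hlog := one_sub_inv_le_log_of_pos hz0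
    have hinv : (1 - z⁻¹) * z = z - 1 := by field_simp
    nlinarith [log_nonpos hz0.le h1]

lemma min_one_one_sub_le_one_sub_mul {c x : ℝ} (hx0 : 0 ≤ x) (hx1 : x ≤ 1) :
    min 1 (1 - c) ≤ 1 - c * x := by
  rcases le_total c 0 with h | h
  · exact (min_le_left _ _).trans (by nlinarith)
  · exact (min_le_right _ _).trans (by nlinarith)

lemma one_sub_mul_pos {c x : ℝ} (hc : c < 1) (hx0 : 0 ≤ x) (hx1 : x ≤ 1) : 0 < 1 - c * x :=
  (lt_min one_pos (sub_pos.2 hc)).trans_le (min_one_one_sub_le_one_sub_mul hx0 hx1)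

lemma abs_log_one_sub_mul_le {c x : ℝ} (hc : c < 1) (hx0 : 0 ≤ x) (hx1 : x ≤ 1) :
    |log (1 - c * x)| ≤ |c| / min 1 (1 - c) * x := by
  have := abs_log_le_abs_sub_one_div (lt_min one_pos (sub_pos.2 hc)) (min_le_left _ _)
    (min_one_one_sub_le_one_sub_mul hx0 hx1)
  rwa [sub_sub_cancel_left, abs_neg, abs_mul, abs_of_nonneg hx0, mul_div_right_comm] at this

lemma integrableOn_log_one_sub_mul_exp_neg_mul {k c : ℝ} (hk : 0 < k) (hc : c < 1) :
    IntegrableOn (fun s => log (1 - c * exp (-k * s))) (Ioi 0) := by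
  refine ((exp_neg_integrableOn_Ioi 0 hk).const_mul (|c| / min 1 (1 - c))).mono'
    (by fun_prop : Measurable _).aestronglyMeasurable ?_
  filter_upwards [ae_restrict_mem measurableSet_Ioi] with s hs
  obtain ⟨hx0, hx1⟩ := exp_neg_mul_mem_Ioo hk hs
  exact abs_log_one_sub_mul_le hc hx0.le hx1.le

lemma integral_log_one_sub_mul_exp_neg_mul {k : ℝ} (hk : 0 < k) (c : ℝ) :
    ∫ s in Ioi 0, log (1 - c * exp (-k * s)) = -(k⁻¹ * dilog c) := by
  rw [integral_Ioi_comp_exp_neg_mul hk (fun x => log (1 - c * x)), smul_eq_mul, ← mul_neg,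
    ← integral_log_one_sub_mul_div, intervalIntegral.integral_of_le zero_le_one,
    integral_Ioc_eq_integral_Ioo]
  simp_rw [smul_eq_mul, inv_mul_eq_div]

lemma one_sub_vg_eq_mul {θ σ ν μp μn : ℝ} (hν : 0 < ν)
    (hμp : μp = (1/2) * Real.sqrt (θ^2 + 2*σ^2/ν) + θ/2)
    (hμn : μn = (1/2) * Real.sqrt (θ^2 + 2*σ^2/ν) - θ/2) (u x : ℝ) :
    1 - u * x * θ * ν - u^2 * x^2 * σ^2 * ν / 2
      = (1 - u * μp * ν * x) * (1 - -(u * μn * ν) * x) := by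
  have hsq : Real.sqrt (θ^2 + 2*σ^2/ν) ^ 2 * ν = θ^2 * ν + 2*σ^2 := by
    rw [Real.sq_sqrt (by positivity)]; field_simp
  subst hμp hμn
  linear_combination (u^2 * x^2 * ν / 4) * hsq

theorem ouvg_stationary_cumulant_general
    (k θ σ ν : ℝ) (hk : 0 < k) (hν : 0 < ν)
    (μp μn : ℝ)
    (hμp : μp = (1/2) * Real.sqrt (θ^2 + 2*σ^2/ν) + θ/2)
    (hμn : μn = (1/2) * Real.sqrt (θ^2 + 2*σ^2/ν) - θ/2)
    (u : ℝ) (hup : u * μp * ν < 1) (hun : -1 < u * μn * ν) :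
    IntegrableOn
        (fun s => -(1/ν) * Real.log (1 - u * Real.exp (-k*s) * θ * ν
          - u^2 * Real.exp (-2*k*s) * σ^2 * ν / 2)) (Set.Ioi (0:ℝ)) ∧
      ∫ s in Set.Ioi (0:ℝ),
          -(1/ν) * Real.log (1 - u * Real.exp (-k*s) * θ * ν
            - u^2 * Real.exp (-2*k*s) * σ^2 * ν / 2) =
        (1/(k*ν)) * (dilog (u*μp*ν) + dilog (-(u*μn*ν))) := by
  have hun' : -(u * μn * ν) < 1 := by linarith
  have hsplit : EqOn
      (fun s => -(1/ν) * log (1 - u * exp (-k*s) * θ * ν - u^2 * exp (-2*k*s) * σ^2 * ν / 2))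
      (fun s => -(1/ν) * log (1 - u * μp * ν * exp (-k*s))
        + -(1/ν) * log (1 - -(u * μn * ν) * exp (-k*s))) (Ioi 0) := by
    intro s hs
    obtain ⟨hx0, hx1⟩ := exp_neg_mul_mem_Ioo hk hs
    dsimp only
    rw [show exp (-2*k*s) = exp (-k*s) ^ 2 by rw [← exp_nat_mul]; ring_nf,
      one_sub_vg_eq_mul hν hμp hμn, log_mul (one_sub_mul_pos hup hx0.le hx1.le).ne'
        (one_sub_mul_pos hun' hx0.le hx1.le).ne']
    ring
  have hp := (integrableOn_log_one_sub_mul_exp_neg_mul hk hup).const_mul (-(1/ν))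
  have hn := (integrableOn_log_one_sub_mul_exp_neg_mul hk hun').const_mul (-(1/ν))
  refine ⟨IntegrableOn.congr_fun (hp.add hn) hsplit.symm measurableSet_Ioi, ?_⟩
  rw [setIntegral_congr_fun measurableSet_Ioi hsplit, integral_add hp hn, integral_const_mul,
    integral_const_mul, integral_log_one_sub_mul_exp_neg_mul hk,
    integral_log_one_sub_mul_exp_neg_mul hk]
  field_simp

/-- Cumulant function of the stationary law of the OU-VG process
(the paper's Proposition, Equation (14)). -/
theorem ouvg_stationary_cumulant
    (k θ σ ν : ℝ) (hk : 0 < k) (hσ : 0 < σ) (hν : 0 < ν)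
    (μp μn : ℝ)
    (hμp : μp = (1/2) * Real.sqrt (θ^2 + 2*σ^2/ν) + θ/2)
    (hμn : μn = (1/2) * Real.sqrt (θ^2 + 2*σ^2/ν) - θ/2)
    (u : ℝ) (hup : u * μp * ν < 1) (hun : -1 < u * μn * ν) :
    IntegrableOn
        (fun s => -(1/ν) * Real.log (1 - u * Real.exp (-k*s) * θ * ν
          - u^2 * Real.exp (-2*k*s) * σ^2 * ν / 2)) (Set.Ioi (0:ℝ)) ∧
      ∫ s in Set.Ioi (0:ℝ),
          -(1/ν) * Real.log (1 - u * Real.exp (-k*s) * θ * ν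
            - u^2 * Real.exp (-2*k*s) * σ^2 * ν / 2) =
        (1/(k*ν)) * (dilog (u*μp*ν) + dilog (-(u*μn*ν))) :=
  ouvg_stationary_cumulant_general k θ σ ν hk hν μp μn hμp hμn u hup hun
end

section
/- Let k > 0, t > 0, θ ∈ ℝ, σ > 0, ν > 0, and define μ_p = (1/2)·√(θ² + 2σ²/ν) + θ/2 and μ_n = (1/2)·√(θ² + 2σ²/ν) − θ/2. Then for every u ∈ ℝ satisfying u·μ_p·ν < 1 and u·μ_n·ν > −1, one has ∫₀^t −(1/ν)·log(1 − u·e^{-k·s}·θ·ν − u²·e^{-2k·s}·σ²·ν/2) ds = (1/(k·ν))·( dilog(u·μ_p·ν) − dilog(u·μ_p·ν·e^{-k·t}) + dilog(−u·μ_n·ν) − dilog(−u·μ_n·ν·e^{-k·t}) ), where dilog(z) := −∫₀^z log(1 − y)/y dy. -/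
/-!
The quadratic under the logarithm factors as `(1 - u μp ν e^{-ks}) (1 + u μn ν e^{-ks})`, so the
integrand splits into two terms `log (1 - z e^{-ks})` with `z < 1`, and each of these is
`1/k` times the `s`-derivative of `dilog (z e^{-ks})`.

The integrand `log (1 - y) / y` of `dilog` has a removable singularity at `0`; the fundamental
theorem of calculus is applied to its continuous extension `dslope (fun y => log (1 - y)) 0`.
-/

open Real MeasureTheory Set

lemma dslope_log_one_sub_of_ne {y : ℝ} (hy : y ≠ 0) :
    dslope (fun y => log (1 - y)) 0 y = log (1 - y) / y := by
  simp [dslope_of_ne _ hy, slope_def_field]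

lemma mul_dslope_log_one_sub (y : ℝ) : y * dslope (fun y => log (1 - y)) 0 y = log (1 - y) := by
  simpa using sub_smul_dslope (fun y => log (1 - y)) 0 y

lemma continuousOn_dslope_log_one_sub :
    ContinuousOn (dslope (fun y => log (1 - y)) 0) (Iio 1) := by
  have hlog : ∀ x : ℝ, x < 1 → DifferentiableAt ℝ (fun y => log (1 - y)) x := fun x hx =>
    (differentiableAt_id.const_sub 1).log (sub_ne_zero.2 hx.ne')
  intro y hy
  refine ContinuousAt.continuousWithinAt ?_
  rcases eq_or_ne y 0 with rfl | hy0
  · exact continuousAt_dslope_same.2 (hlog 0 zero_lt_one)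
  · exact (continuousAt_dslope_of_ne hy0).2 (hlog y hy).continuousAt

lemma dilog_eq_neg_integral_dslope (z : ℝ) :
    dilog z = -∫ y in (0:ℝ)..z, dslope (fun y => log (1 - y)) 0 y := by
  refine congrArg Neg.neg (intervalIntegral.integral_congr_ae ?_)
  have hne : ∀ᵐ y : ℝ, y ≠ 0 := by simp [ae_iff]
  filter_upwards [hne] with y hy _
  rw [dslope_log_one_sub_of_ne hy]

lemma hasDerivAt_dilog {z : ℝ} (hz : z < 1) :
    HasDerivAt dilog (-dslope (fun y => log (1 - y)) 0 z) z := by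
  have hint : IntervalIntegrable (dslope (fun y => log (1 - y)) 0) volume 0 z :=
    (continuousOn_dslope_log_one_sub.mono fun y hy => hy.2.trans_lt (max_lt zero_lt_one hz)
      ).intervalIntegrable
  rw [funext dilog_eq_neg_integral_dslope]
  exact (intervalIntegral.integral_hasDerivAt_right hint
    (continuousOn_dslope_log_one_sub.stronglyMeasurableAtFilter isOpen_Iio z hz)
    (continuousOn_dslope_log_one_sub.continuousAt (Iio_mem_nhds hz))).neg

lemma hasDerivAt_dilog_mul_exp {z k s : ℝ} (hzs : z * exp (-k*s) < 1) :
    HasDerivAt (fun s => dilog (z * exp (-k*s))) (k * log (1 - z * exp (-k*s))) s := by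
  have hinner : HasDerivAt (fun s => z * exp (-k*s)) (z * exp (-k*s) * -k) s := by
    simpa [mul_assoc] using (((hasDerivAt_id s).const_mul (-k)).exp).const_mul z
  refine ((hasDerivAt_dilog hzs).comp s hinner).congr_deriv ?_
  rw [← mul_dslope_log_one_sub]
  ring

lemma mul_exp_neg_mul_lt_one {z k s : ℝ} (hz : z < 1) (hk : 0 ≤ k) (hs : 0 ≤ s) :
    z * exp (-k*s) < 1 := by
  have he0 : 0 < exp (-k*s) := exp_pos _
  have he1 : exp (-k*s) ≤ 1 := exp_le_one_iff.2 (by nlinarith)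
  nlinarith

lemma intervalIntegrable_log_one_sub_mul_exp {z k t : ℝ} (hz : z < 1) (hk : 0 ≤ k) (ht : 0 ≤ t) :
    IntervalIntegrable (fun s => log (1 - z * exp (-k*s))) volume 0 t := by
  refine ContinuousOn.intervalIntegrable ?_
  refine ((continuous_const.sub (continuous_const.mul
    (continuous_exp.comp (continuous_const.mul continuous_id)))).continuousOn).log ?_
  intro s hs
  rw [uIcc_of_le ht] at hs
  exact (sub_pos.2 (mul_exp_neg_mul_lt_one hz hk hs.1)).ne'

lemma integral_log_one_sub_mul_exp {z k t : ℝ} (hz : z < 1) (hk : 0 < k) (ht : 0 ≤ t) :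
    ∫ s in (0:ℝ)..t, log (1 - z * exp (-k*s)) = (dilog (z * exp (-k*t)) - dilog z) / k := by
  have hderiv : ∀ s ∈ uIcc 0 t, HasDerivAt (fun s => dilog (z * exp (-k*s)) / k)
      (log (1 - z * exp (-k*s))) s := by
    intro s hs
    rw [uIcc_of_le ht] at hs
    exact ((hasDerivAt_dilog_mul_exp (mul_exp_neg_mul_lt_one hz hk.le hs.1)).div_const k
      ).congr_deriv (by field_simp)
  rw [intervalIntegral.integral_eq_sub_of_hasDerivAt hderiv
    (intervalIntegrable_log_one_sub_mul_exp hz hk.le ht)]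
  simp only [mul_zero, exp_zero, mul_one]
  ring

/-- This is `μp - μn = θ` and `μp μn = σ² / (2ν)`. -/
lemma one_sub_vg_quadratic_eq_mul {θ σ ν μp μn : ℝ} (hν : 0 < ν)
    (hμp : μp = (1/2) * Real.sqrt (θ^2 + 2*σ^2/ν) + θ/2)
    (hμn : μn = (1/2) * Real.sqrt (θ^2 + 2*σ^2/ν) - θ/2) (u e : ℝ) :
    1 - u * e * θ * ν - u^2 * e^2 * σ^2 * ν / 2 = (1 - u*μp*ν * e) * (1 - -(u*μn*ν) * e) := by
  have hsq : ν * Real.sqrt (θ^2 + 2*σ^2/ν) ^ 2 = ν * θ^2 + 2*σ^2 := by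
    rw [Real.sq_sqrt (by positivity)]
    field_simp
  subst hμp hμn
  linear_combination (u^2 * e^2 * ν / 4) * hsq

theorem ouvg_increment_cumulant_general
    (k t θ σ ν : ℝ) (hk : 0 < k) (ht : 0 < t) (hν : 0 < ν)
    (μp μn : ℝ)
    (hμp : μp = (1/2) * Real.sqrt (θ^2 + 2*σ^2/ν) + θ/2)
    (hμn : μn = (1/2) * Real.sqrt (θ^2 + 2*σ^2/ν) - θ/2)
    (u : ℝ) (hup : u * μp * ν < 1) (hun : -1 < u * μn * ν) :
    ∫ s in (0:ℝ)..t,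
        -(1/ν) * Real.log (1 - u * Real.exp (-k*s) * θ * ν
          - u^2 * Real.exp (-2*k*s) * σ^2 * ν / 2) =
      (1/(k*ν)) * (dilog (u*μp*ν) - dilog (u*μp*ν * Real.exp (-k*t))
        + dilog (-(u*μn*ν)) - dilog (-(u*μn*ν) * Real.exp (-k*t))) := by
  have hneg : -(u*μn*ν) < 1 := by linarith
  have hsplit : ∀ s ∈ uIcc 0 t,
      -(1/ν) * log (1 - u * exp (-k*s) * θ * ν - u^2 * exp (-2*k*s) * σ^2 * ν / 2) =
        -(1/ν) * (log (1 - u*μp*ν * exp (-k*s)) + log (1 - -(u*μn*ν) * exp (-k*s))) := by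
    intro s hs
    rw [uIcc_of_le ht.le] at hs
    have hexp : exp (-2*k*s) = exp (-k*s) ^ 2 := by rw [← exp_nat_mul]; ring_nf
    rw [hexp, one_sub_vg_quadratic_eq_mul hν hμp hμn, log_mul
      (sub_pos.2 (mul_exp_neg_mul_lt_one hup hk.le hs.1)).ne'
      (sub_pos.2 (mul_exp_neg_mul_lt_one hneg hk.le hs.1)).ne']
  rw [intervalIntegral.integral_congr hsplit, intervalIntegral.integral_const_mul,
    intervalIntegral.integral_add (intervalIntegrable_log_one_sub_mul_exp hup hk.le ht.le)
      (intervalIntegrable_log_one_sub_mul_exp hneg hk.le ht.le),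
    integral_log_one_sub_mul_exp hup hk ht.le, integral_log_one_sub_mul_exp hneg hk ht.le]
  field_simp
  ring

/-- Cumulant function of the increment of the OU-VG process over `[0, t]`
(the paper's Proposition, Equation (15)). -/
theorem ouvg_increment_cumulant
    (k t θ σ ν : ℝ) (hk : 0 < k) (ht : 0 < t) (hσ : 0 < σ) (hν : 0 < ν)
    (μp μn : ℝ)
    (hμp : μp = (1/2) * Real.sqrt (θ^2 + 2*σ^2/ν) + θ/2)
    (hμn : μn = (1/2) * Real.sqrt (θ^2 + 2*σ^2/ν) - θ/2)
    (u : ℝ) (hup : u * μp * ν < 1) (hun : -1 < u * μn * ν) :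
    ∫ s in (0:ℝ)..t,
        -(1/ν) * Real.log (1 - u * Real.exp (-k*s) * θ * ν
          - u^2 * Real.exp (-2*k*s) * σ^2 * ν / 2) =
      (1/(k*ν)) * (dilog (u*μp*ν) - dilog (u*μp*ν * Real.exp (-k*t))
        + dilog (-(u*μn*ν)) - dilog (-(u*μn*ν) * Real.exp (-k*t))) :=
  ouvg_increment_cumulant_general k t θ σ ν hk ht hν μp μn hμp hμn u hup hun
end

section
/- Let k > 0, σ > 0, ν > 0, and let u ∈ ℝ satisfy u²·σ²·ν/2 < 1. Then the integral ∫₀^∞ −(1/ν)·log(1 − u²·e^{-2k·s}·σ²·ν/2) ds converges and equals (1/(2k·ν))·dilog(u²·σ²·ν/2), where dilog(z) := −∫₀^z log(1 − y)/y dy. -/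
/-!
Since `dilog' z = -log (1 - z) / z` on `(0, 1)`, the chain rule makes
`s ↦ -dilog (c e^{-a s}) / a` an antiderivative of the nonnegative function
`s ↦ -log (1 - c e^{-a s})`. As `s → ∞` it tends to `-dilog 0 / a = 0`, by continuity of the
primitive `dilog` at `0` (its integrand is bounded by `(1 - c)⁻¹` on `(0, c]`), so the improper
fundamental theorem of calculus gives integrability and the value `dilog c / a`.
The theorem is the case `a = 2k`, `c = u²σ²ν/2`, scaled by `1/ν`.
-/

open Real MeasureTheory Set

open Filter Topology

lemma abs_log_one_sub_div_le {y : ℝ} (hy0 : 0 < y) (hy1 : y < 1) :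
    |log (1 - y) / y| ≤ (1 - y)⁻¹ := by
  have h1y : 0 < 1 - y := by linarith
  have hlog : log (1 - y) ≤ 0 := log_nonpos h1y.le (by linarith)
  have hinv : -log (1 - y) ≤ (1 - y)⁻¹ - 1 := by
    rw [← log_inv]; exact log_le_sub_one_of_pos (inv_pos.2 h1y)
  rw [abs_div, abs_of_nonpos hlog, abs_of_pos hy0, div_le_iff₀ hy0]
  calc -log (1 - y) ≤ (1 - y)⁻¹ - 1 := hinv
    _ = (1 - y)⁻¹ * y := by field_simp; ring

lemma intervalIntegrable_log_one_sub_div {z : ℝ} (hz0 : 0 ≤ z) (hz1 : z < 1) :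
    IntervalIntegrable (fun y => log (1 - y) / y) volume 0 z := by
  rw [intervalIntegrable_iff_integrableOn_Ioc_of_le hz0]
  refine Measure.integrableOn_of_bounded (M := (1 - z)⁻¹) measure_Ioc_lt_top.ne
    (by fun_prop : Measurable fun y : ℝ => log (1 - y) / y).aestronglyMeasurable ?_
  filter_upwards [ae_restrict_mem measurableSet_Ioc] with y ⟨hy0, hyz⟩
  exact (abs_log_one_sub_div_le hy0 (hyz.trans_lt hz1)).trans
    (inv_anti₀ (by linarith) (by linarith))

lemma dilog_zero : dilog 0 = 0 := by simp [dilog]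

lemma continuousOn_dilog {c : ℝ} (hc0 : 0 ≤ c) (hc1 : c < 1) :
    ContinuousOn dilog (Icc 0 c) := by
  have := intervalIntegral.continuousOn_primitive_interval'
    (intervalIntegrable_log_one_sub_div hc0 hc1) left_mem_uIcc
  rw [uIcc_of_le hc0] at this
  exact this.neg

lemma hasDerivAt_dilog_s7 {z : ℝ} (hz0 : 0 < z) (hz1 : z < 1) :
    HasDerivAt dilog (-(log (1 - z) / z)) z := by
  have hmeas : Measurable fun y : ℝ => log (1 - y) / y := by fun_prop
  have hcont : ContinuousAt (fun y => log (1 - y) / y) z :=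
    ((continuousAt_log (by linarith)).comp (by fun_prop)).div continuousAt_id hz0.ne'
  exact (intervalIntegral.integral_hasDerivAt_right (intervalIntegrable_log_one_sub_div hz0.le hz1)
    hmeas.aestronglyMeasurable.stronglyMeasurableAtFilter hcont).neg

theorem integrableOn_and_integral_Ioi_neg_log_one_sub_mul_exp {a c : ℝ} (ha : 0 < a)
    (hc0 : 0 ≤ c) (hc1 : c < 1) :
    IntegrableOn (fun s => -log (1 - c * exp (-(a * s)))) (Ioi 0) ∧
      ∫ s in Ioi 0, -log (1 - c * exp (-(a * s))) = dilog c / a := by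
  rcases hc0.eq_or_lt with rfl | hc_pos
  · simp [dilog_zero]
  set z : ℝ → ℝ := fun s => c * exp (-(a * s))
  have hz_mem : ∀ s, 0 ≤ s → z s ∈ Ioc 0 c := fun s hs =>
    ⟨by positivity, mul_le_of_le_one_right hc0 (exp_le_one_iff.2 (by nlinarith))⟩
  have hderiv : ∀ s ∈ Ici (0:ℝ), HasDerivAt (fun s => -dilog (z s) / a)
      (-log (1 - z s)) s := by
    intro s hs
    obtain ⟨hz0, hzc⟩ := hz_mem s hs
    have hz : HasDerivAt z (z s * -a) s := by
      simpa [z, mul_assoc] using ((hasDerivAt_id s).const_mul a).neg.exp.const_mul c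
    refine (((hasDerivAt_dilog_s7 hz0 (hzc.trans_lt hc1)).comp s hz).neg.div_const a).congr_deriv
      ?_
    field_simp
  have hpos : ∀ s ∈ Ioi (0:ℝ), 0 ≤ -log (1 - z s) := fun s hs => by
    obtain ⟨hz0, hzc⟩ := hz_mem s (le_of_lt hs)
    exact neg_nonneg.2 (log_nonpos (by linarith) (by linarith))
  have hlim : Tendsto (fun s => -dilog (z s) / a) atTop (𝓝 (-dilog 0 / a)) := by
    have hz : Tendsto z atTop (𝓝[Icc 0 c] 0) := by
      refine tendsto_nhdsWithin_iff.2 ⟨?_, ?_⟩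
      · simpa using (tendsto_exp_neg_atTop_nhds_zero.comp
          (tendsto_id.const_mul_atTop ha)).const_mul c
      · filter_upwards [eventually_ge_atTop 0] with s hs
        exact Ioc_subset_Icc_self (hz_mem s hs)
    exact (((continuousOn_dilog hc0 hc1) 0 ⟨le_rfl, hc0⟩).tendsto.comp hz).neg.div_const a
  refine ⟨integrableOn_Ioi_deriv_of_nonneg' hderiv hpos hlim, ?_⟩
  rw [integral_Ioi_of_hasDerivAt_of_nonneg' hderiv hpos hlim]
  simp only [dilog_zero, neg_zero, zero_div, mul_zero, exp_zero, mul_one, zero_sub, z]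
  ring

theorem ousvg_stationary_cumulant_general
    (k σ ν u : ℝ) (hk : 0 < k) (hν : 0 < ν)
    (hu : u^2 * σ^2 * ν / 2 < 1) :
    IntegrableOn
        (fun s => -(1/ν) * Real.log (1 - u^2 * Real.exp (-2*k*s) * σ^2 * ν / 2))
        (Set.Ioi (0:ℝ)) ∧
      ∫ s in Set.Ioi (0:ℝ),
          -(1/ν) * Real.log (1 - u^2 * Real.exp (-2*k*s) * σ^2 * ν / 2) =
        (1/(2*k*ν)) * dilog (u^2 * σ^2 * ν / 2) := by
  set c := u^2 * σ^2 * ν / 2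
  have hintegrand : (fun s => -(1/ν) * log (1 - u^2 * exp (-2*k*s) * σ^2 * ν / 2)) =
      fun s => ν⁻¹ * -log (1 - c * exp (-(2*k * s))) := by
    ext s
    rw [show u^2 * exp (-2*k*s) * σ^2 * ν / 2 = c * exp (-(2*k * s)) by simp only [c]; ring_nf]
    ring
  obtain ⟨hint, hval⟩ := integrableOn_and_integral_Ioi_neg_log_one_sub_mul_exp
    (by positivity : 0 < 2*k) (by positivity : 0 ≤ c) hu
  rw [hintegrand, integral_const_mul, hval]
  refine ⟨hint.const_mul _, ?_⟩
  field_simp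

/-- Cumulant function of the stationary law of the symmetric OU-VG process
(the paper's Equation (18)). -/
theorem ousvg_stationary_cumulant
    (k σ ν u : ℝ) (hk : 0 < k) (hσ : 0 < σ) (hν : 0 < ν)
    (hu : u^2 * σ^2 * ν / 2 < 1) :
    IntegrableOn
        (fun s => -(1/ν) * Real.log (1 - u^2 * Real.exp (-2*k*s) * σ^2 * ν / 2))
        (Set.Ioi (0:ℝ)) ∧
      ∫ s in Set.Ioi (0:ℝ),
          -(1/ν) * Real.log (1 - u^2 * Real.exp (-2*k*s) * σ^2 * ν / 2) =
        (1/(2*k*ν)) * dilog (u^2 * σ^2 * ν / 2) :=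
  ousvg_stationary_cumulant_general k σ ν u hk hν hu
end

section
/- Let α > 0, β > 0, k > 0, Δ > 0, and let u ∈ ℝ with u < β. Then (α/k)·∫_{e^{-kΔ}}^1 ( −log(1 − u·x/β) / x ) dx = α·Δ·log( β·e^{kΔ} / (β·e^{kΔ} − u) ) + (α·k·Δ²/2)·( ∫₀¹ β·e^{kΔ·√v} / (β·e^{kΔ·√v} − u) dv − 1 ). -/
/-!
Put `T = k Δ` and `φ s = log (β eˢ / (β eˢ - u))`, the cumulant function at `u` of an exponential
law of rate `β eˢ`. The substitution `x = e⁻ˢ` turns the left-hand side into `(α / k) ∫₀ᵀ φ`.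
Integration by parts gives `∫₀ᵀ φ = T φ(T) + ∫₀ᵀ s (-φ' s) ds` with
`-φ' s = β eˢ / (β eˢ - u) - 1`, and the substitution `s = T √v` rewrites the last integral as
`T² / 2 ∫₀¹ (-φ') (T √v) dv`.
-/

open Real Set MeasureTheory intervalIntegral

theorem integral_div_eq_integral_comp_exp_neg (h : ℝ → ℝ) (T : ℝ) :
    ∫ x in exp (-T)..1, h x / x = ∫ s in 0..T, h (exp (-s)) := by
  have hsub := integral_comp_mul_deriv_of_deriv_nonneg (a := -T) (b := 0)
    (f := exp) (f' := exp) (g := fun x => h x / x) continuous_exp.continuousOn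
    (fun s _ => hasDerivAt_exp s) (fun s _ => (exp_pos s).le)
  rw [← exp_zero, ← hsub, integral_comp_neg (fun s => h (exp s)), neg_zero]
  refine integral_congr fun s _ => ?_
  simp [(exp_pos _).ne']

theorem integral_eq_mul_sub_integral_mul_deriv {φ φ' : ℝ → ℝ} {a b : ℝ}
    (hφ : ∀ x ∈ uIcc a b, HasDerivAt φ (φ' x) x) (hφ' : IntervalIntegrable φ' volume a b) :
    ∫ x in a..b, φ x = b * φ b - a * φ a - ∫ x in a..b, x * φ' x := by
  have := integral_mul_deriv_eq_deriv_mul (fun x _ => hasDerivAt_id x) hφ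
    intervalIntegrable_const hφ'
  simp only [id, one_mul] at this
  linarith

theorem integral_mul_eq_integral_comp_mul_sqrt (g : ℝ → ℝ) {T : ℝ} (hT : 0 < T) :
    ∫ s in 0..T, s * g s = T ^ 2 / 2 * ∫ v in 0..1, g (T * √v) := by
  have hsub := integral_comp_mul_deriv_of_deriv_nonneg (a := 0) (b := T)
    (f := fun s => (s / T) ^ 2) (f' := fun s => 2 * s / T ^ 2) (g := fun v => g (T * √v))
    (by fun_prop)
    (fun s _ => (((hasDerivAt_id' s).div_const T).fun_pow 2).congr_deriv (by ring))
    (fun s hs => by rw [min_eq_left hT.le] at hs; have := hs.1; positivity)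
  rw [zero_div, div_self hT.ne', zero_pow two_ne_zero, one_pow] at hsub
  rw [← hsub, ← intervalIntegral.integral_const_mul]
  refine integral_congr fun s hs => ?_
  rw [uIcc_of_le hT.le] at hs
  simp only [Function.comp, sqrt_sq (div_nonneg hs.1 hT.le), mul_div_cancel₀ s hT.ne']
  field_simp

theorem hasDerivAt_log_mul_exp_div_mul_exp_sub {β u : ℝ} (hβ : β ≠ 0) {s : ℝ}
    (hs : β * exp s - u ≠ 0) :
    HasDerivAt (fun t => log (β * exp t / (β * exp t - u)))
      (1 - β * exp s / (β * exp s - u)) s := by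
  have hr : HasDerivAt (fun t => β * exp t) (β * exp s) s := (hasDerivAt_exp s).const_mul β
  have := HasDerivAt.log (f := fun t => β * exp t / (β * exp t - u))
    (hr.div (hr.sub_const u) hs) (div_ne_zero (by positivity) hs)
  convert this using 1
  field_simp

theorem inv_one_sub_mul_exp_neg_div {β : ℝ} (hβ : β ≠ 0) (u s : ℝ) :
    (1 - u * exp (-s) / β)⁻¹ = β * exp s / (β * exp s - u) := by
  rw [exp_neg]
  field_simp

theorem integral_neg_log_one_sub_div_eq {β u T : ℝ} (hβ : 0 < β) (hu : u < β) (hT : 0 < T) :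
    ∫ x in exp (-T)..1, -log (1 - u * x / β) / x =
      T * log (β * exp T / (β * exp T - u)) +
        T ^ 2 / 2 * ((∫ v in (0:ℝ)..1, β * exp (T * √v) / (β * exp (T * √v) - u)) - 1) := by
  set r : ℝ → ℝ := fun t => β * exp t / (β * exp t - u) with hr
  have hden : ∀ t, 0 ≤ t → 0 < β * exp t - u := fun t ht => by nlinarith [one_le_exp ht]
  have hr_cont : ContinuousOn r (Ici 0) :=
    ContinuousOn.div (by fun_prop) (by fun_prop) fun t ht => (hden t ht).ne'
  have hderiv : ∀ t ∈ uIcc 0 T, HasDerivAt (fun t => log (r t)) (1 - r t) t := fun t ht =>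
    hasDerivAt_log_mul_exp_div_mul_exp_sub hβ.ne' (hden t (uIcc_of_le hT.le ▸ ht).1).ne'
  have hderiv_int : IntervalIntegrable (fun t => 1 - r t) volume 0 T :=
    (continuousOn_const.sub
      (hr_cont.mono fun t ht => (uIcc_of_le hT.le ▸ ht).1)).intervalIntegrable
  have hr_sqrt : IntervalIntegrable (fun v => r (T * √v)) volume 0 1 :=
    (hr_cont.comp_continuous (by fun_prop)
      fun v => mem_Ici.2 (by positivity)).intervalIntegrable 0 1
  calc ∫ x in exp (-T)..1, -log (1 - u * x / β) / x
      = ∫ s in 0..T, log (r s) := by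
        rw [integral_div_eq_integral_comp_exp_neg (fun x => -log (1 - u * x / β))]
        simp only [hr, ← inv_one_sub_mul_exp_neg_div hβ.ne', log_inv]
    _ = T * log (r T) + ∫ s in 0..T, s * (r s - 1) := by
        rw [integral_eq_mul_sub_integral_mul_deriv hderiv hderiv_int, sub_eq_add_neg,
          ← intervalIntegral.integral_neg]
        simp only [zero_mul, sub_zero, neg_mul_eq_mul_neg, neg_sub]
    _ = _ := by
        rw [integral_mul_eq_integral_comp_mul_sqrt _ hT,
          integral_sub hr_sqrt intervalIntegrable_const]
        simp only [intervalIntegral.integral_const, sub_zero, smul_eq_mul, mul_one]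
        rfl

theorem ou_gamma_increment_decomposition_general
    (α β k Δ u : ℝ) (hβ : 0 < β) (hk : 0 < k) (hΔ : 0 < Δ)
    (hu : u < β) :
    (α / k) * ∫ x in Real.exp (-k * Δ)..1, -Real.log (1 - u * x / β) / x =
      α * Δ * Real.log (β * Real.exp (k * Δ) / (β * Real.exp (k * Δ) - u)) +
        (α * k * Δ^2 / 2) *
          ((∫ v in (0:ℝ)..1,
              β * Real.exp (k * Δ * Real.sqrt v)
                / (β * Real.exp (k * Δ * Real.sqrt v) - u)) - 1) := by
  rw [neg_mul, integral_neg_log_one_sub_div_eq hβ hu (mul_pos hk hΔ)]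
  field_simp

/-- Cumulant-function form of the Qu–Dassios–Zhao decomposition of the
increment of an OU-Γ process into a gamma random variable plus a compound
Poisson sum of exponential jumps with randomized rate. -/
theorem ou_gamma_increment_decomposition
    (α β k Δ u : ℝ) (hα : 0 < α) (hβ : 0 < β) (hk : 0 < k) (hΔ : 0 < Δ)
    (hu : u < β) :
    (α / k) * ∫ x in Real.exp (-k * Δ)..1, -Real.log (1 - u * x / β) / x =
      α * Δ * Real.log (β * Real.exp (k * Δ) / (β * Real.exp (k * Δ) - u)) +
        (α * k * Δ^2 / 2) *
          ((∫ v in (0:ℝ)..1,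
              β * Real.exp (k * Δ * Real.sqrt v)
                / (β * Real.exp (k * Δ * Real.sqrt v) - u)) - 1) :=
  ou_gamma_increment_decomposition_general α β k Δ u hβ hk hΔ hu
end
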